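/- arXiv:1806.05379 — 6 statements merged into one kernel-verified Lean document; each statement's English description precedes it below -/
import Mathlib

section
/- Let $\alpha > 1$, $m_\alpha > m_1^\alpha > 0$, and define $\eta_0 = 1 - (m_1^\alpha/m_\alpha)^{1/(\alpha-1)}$. Then $\eta_0 \in (0,1)$, and for every critical ratio $\eta \in [0, \eta_0)$, the quantity $q = 0$ minimizes over $q \geq 0$ the objective $(1-\eta)q + \sup_{F \in \mathcal{F}_{1,\alpha}} \mathbb{E}_F[\max(\tilde d - q, 0)]$. -/
/-!
Write `p = (m₁^α / m_α)^{1/(α-1)} ∈ (0,1)`, so that `η₀ = 1 - p`. Every feasible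
distribution lives on `[0, ∞)`, so its expected overage at an order `q ≥ 0` is at most its
mean `m₁`. Conversely the two-point law with mass `p` at `b = m₁ / p` and mass `1 - p` at `0`
is feasible, and its overage at `q` is `p (b - q)⁺`. Hence, for `η < η₀`, i.e. `1 - η > p`,
the objective at `q` is at least `(1 - η) q + p (b - q)⁺ ≥ p b = m₁`, which bounds the
objective at `0`.
-/

open MeasureTheory Real

/-- Worst-case expected overage over probability distributions on `[0, ∞)`
with mean `m1` and `α`-th moment `mα`. -/
noncomputable def worstOverage (α m1 mα q : ℝ) : ℝ :=
  sSup {E : ℝ | ∃ μ : Measure ℝ, IsProbabilityMeasure μ ∧ μ (Set.Iio 0) = 0 ∧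
    Integrable (fun x => x) μ ∧ Integrable (fun x => x ^ α) μ ∧
    (∫ x, x ∂μ) = m1 ∧ (∫ x, x ^ α ∂μ) = mα ∧
    E = ∫ x, max (x - q) 0 ∂μ}

def overageSet (α m1 mα q : ℝ) : Set ℝ :=
  {E : ℝ | ∃ μ : Measure ℝ, IsProbabilityMeasure μ ∧ μ (Set.Iio 0) = 0 ∧
    Integrable (fun x => x) μ ∧ Integrable (fun x => x ^ α) μ ∧
    (∫ x, x ∂μ) = m1 ∧ (∫ x, x ^ α ∂μ) = mα ∧
    E = ∫ x, max (x - q) 0 ∂μ}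

theorem worstOverage_eq_sSup (α m1 mα q : ℝ) :
    worstOverage α m1 mα q = sSup (overageSet α m1 mα q) := rfl

theorem ae_nonneg_of_measure_Iio_zero {μ : Measure ℝ} (h : μ (Set.Iio 0) = 0) :
    ∀ᵐ x ∂μ, 0 ≤ x := by
  rw [ae_iff]
  simp only [not_le]
  exact h

section Overage

variable {α m1 mα q E : ℝ}

theorem nonneg_of_mem_overageSet (hE : E ∈ overageSet α m1 mα q) : 0 ≤ m1 := by
  obtain ⟨μ, -, hμ0, -, -, hmean, -⟩ := hE
  exact hmean ▸ integral_nonneg_of_ae (ae_nonneg_of_measure_Iio_zero hμ0)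

theorem le_of_mem_overageSet (hq : 0 ≤ q) (hE : E ∈ overageSet α m1 mα q) : E ≤ m1 := by
  obtain ⟨μ, hμ, hμ0, hint, -, hmean, -, rfl⟩ := hE
  rw [← hmean]
  refine integral_mono_ae ((hint.sub (integrable_const q)).sup (integrable_const 0)) hint ?_
  filter_upwards [ae_nonneg_of_measure_Iio_zero hμ0] with x hx
  exact max_le (by linarith) hx

theorem worstOverage_eq_zero_of_neg (hm1 : m1 < 0) : worstOverage α m1 mα q = 0 := by
  rw [worstOverage_eq_sSup, Set.eq_empty_of_forall_notMem
    (fun _ hE => hm1.not_ge (nonneg_of_mem_overageSet hE)), Real.sSup_empty]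

theorem worstOverage_le (hq : 0 ≤ q) (hne : (overageSet α m1 mα q).Nonempty) :
    worstOverage α m1 mα q ≤ m1 :=
  csSup_le hne fun _ => le_of_mem_overageSet hq

theorem le_worstOverage (hq : 0 ≤ q) (hE : E ∈ overageSet α m1 mα q) :
    E ≤ worstOverage α m1 mα q :=
  le_csSup ⟨m1, fun _ => le_of_mem_overageSet hq⟩ hE

end Overage

noncomputable def twoPointMeasure (p b : ℝ) : Measure ℝ :=
  ENNReal.ofReal p • Measure.dirac b + ENNReal.ofReal (1 - p) • Measure.dirac 0

section TwoPoint

variable {p b : ℝ}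

theorem integrable_twoPointMeasure (f : ℝ → ℝ) : Integrable f (twoPointMeasure p b) :=
  integrable_add_measure.mpr
    ⟨(integrable_dirac enorm_lt_top).smul_measure ENNReal.ofReal_ne_top,
      (integrable_dirac enorm_lt_top).smul_measure ENNReal.ofReal_ne_top⟩

theorem integral_twoPointMeasure (hp0 : 0 ≤ p) (hp1 : p ≤ 1) (f : ℝ → ℝ) :
    ∫ x, f x ∂twoPointMeasure p b = p * f b + (1 - p) * f 0 := by
  rw [twoPointMeasure, integral_add_measure
      ((integrable_dirac enorm_lt_top).smul_measure ENNReal.ofReal_ne_top)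
      ((integrable_dirac enorm_lt_top).smul_measure ENNReal.ofReal_ne_top),
    integral_smul_measure, integral_smul_measure, integral_dirac, integral_dirac,
    ENNReal.toReal_ofReal hp0, ENNReal.toReal_ofReal (sub_nonneg.mpr hp1), smul_eq_mul,
    smul_eq_mul]

theorem isProbabilityMeasure_twoPointMeasure (hp0 : 0 ≤ p) (hp1 : p ≤ 1) :
    IsProbabilityMeasure (twoPointMeasure p b) := by
  constructor
  simp only [twoPointMeasure, Measure.coe_add, Measure.coe_smul, Pi.add_apply, Pi.smul_apply,
    measure_univ, smul_eq_mul, mul_one]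
  rw [← ENNReal.ofReal_add hp0 (sub_nonneg.mpr hp1), add_sub_cancel, ENNReal.ofReal_one]

theorem twoPointMeasure_Iio_zero (hb : 0 ≤ b) : twoPointMeasure p b (Set.Iio 0) = 0 := by
  simp [twoPointMeasure, Measure.dirac_apply' _ measurableSet_Iio, hb]

theorem mem_overageSet_twoPointMeasure {α m1 mα : ℝ} (hα : α ≠ 0) (hp0 : 0 ≤ p) (hp1 : p ≤ 1)
    (hb : 0 ≤ b) (hmean : p * b = m1) (hmoment : p * b ^ α = mα) (q : ℝ) (hq : 0 ≤ q) :
    p * max (b - q) 0 ∈ overageSet α m1 mα q := by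
  refine ⟨twoPointMeasure p b, isProbabilityMeasure_twoPointMeasure hp0 hp1,
    twoPointMeasure_Iio_zero hb, integrable_twoPointMeasure _, integrable_twoPointMeasure _,
    ?_, ?_, ?_⟩
  · rw [integral_twoPointMeasure hp0 hp1 fun x => x, hmean, mul_zero, add_zero]
  · rw [integral_twoPointMeasure hp0 hp1 fun x => x ^ α, hmoment, zero_rpow hα, mul_zero,
      add_zero]
  · rw [integral_twoPointMeasure hp0 hp1 fun x => max (x - q) 0,
      max_eq_right (by linarith : 0 - q ≤ 0), mul_zero, add_zero]

end TwoPoint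

theorem mul_div_rpow_eq_of_rpow_sub_one_eq {α m1 mα p : ℝ} (hm1 : 0 < m1) (hp : 0 < p)
    (hmα : 0 < mα) (hpow : p ^ (α - 1) = m1 ^ α / mα) : p * (m1 / p) ^ α = mα := by
  calc p * (m1 / p) ^ α = m1 ^ α / p ^ (α - 1) := by
        rw [div_rpow hm1.le hp.le, rpow_sub hp, rpow_one]
        field_simp
    _ = mα := by
        rw [hpow]
        field_simp

theorem mul_le_mul_add_mul_max_sub {p c b q : ℝ} (hp : 0 ≤ p) (hpc : p ≤ c) (hq : 0 ≤ q) :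
    p * b ≤ c * q + p * max (b - q) 0 := by
  rcases le_total q b with hqb | hbq
  · rw [max_eq_left (sub_nonneg.mpr hqb)]
    nlinarith
  · rw [max_eq_right (sub_nonpos.mpr hbq)]
    nlinarith

theorem zero_order_optimal_low_critical_ratio
    (α m1 mα : ℝ) (hα : 1 < α) (h0 : 0 < m1 ^ α) (h1 : m1 ^ α < mα) :
    let η0 : ℝ := 1 - (m1 ^ α / mα) ^ (1 / (α - 1))
    0 < η0 ∧ η0 < 1 ∧
      ∀ η : ℝ, 0 ≤ η → η < η0 → ∀ q : ℝ, 0 ≤ q →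
        (1 - η) * 0 + worstOverage α m1 mα 0 ≤ (1 - η) * q + worstOverage α m1 mα q := by
  intro η0
  have hmα : 0 < mα := h0.trans h1
  have hratio : 0 < m1 ^ α / mα := div_pos h0 hmα
  have hpow : ((m1 ^ α / mα) ^ (1 / (α - 1))) ^ (α - 1) = m1 ^ α / mα := by
    rw [one_div, rpow_inv_rpow hratio.le (sub_pos.mpr hα).ne']
  set p := (m1 ^ α / mα) ^ (1 / (α - 1))
  have hp0 : 0 < p := rpow_pos_of_pos hratio _
  have hp1 : p < 1 :=
    rpow_lt_one hratio.le ((div_lt_one hmα).mpr h1) (one_div_pos.mpr (sub_pos.mpr hα))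
  refine ⟨by linarith, by linarith, fun η _ hη q hq => ?_⟩
  have hm1 : m1 ≠ 0 := by rintro rfl; simp [zero_rpow (by linarith : α ≠ 0)] at h0
  -- `rpow` at a negative base can be positive; for `m1 < 0` nothing is feasible and `sSup ∅ = 0`.
  rcases hm1.lt_or_gt with hm1 | hm1
  · simp only [worstOverage_eq_zero_of_neg hm1]
    nlinarith
  have hmem := mem_overageSet_twoPointMeasure (by linarith) hp0.le hp1.le (div_pos hm1 hp0).le
    (mul_div_cancel₀ m1 hp0.ne') (mul_div_rpow_eq_of_rpow_sub_one_eq hm1 hp0 hmα hpow)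
  calc (1 - η) * 0 + worstOverage α m1 mα 0 ≤ m1 := by
        simpa only [mul_zero, zero_add] using worstOverage_le le_rfl ⟨_, hmem 0 le_rfl⟩
    _ = p * (m1 / p) := (mul_div_cancel₀ m1 hp0.ne').symm
    _ ≤ (1 - η) * q + p * max (m1 / p - q) 0 :=
        mul_le_mul_add_mul_max_sub hp0.le (by linarith) hq
    _ ≤ (1 - η) * q + worstOverage α m1 mα q := by
        gcongr
        exact le_worstOverage hq (hmem q hq)
end

section
/- Let $\alpha > 1$ and $m_\alpha > 0$. For $q > \frac{\alpha-1}{\alpha} m_\alpha^{1/\alpha}$, the two-point random variable taking value $\frac{q\alpha}{\alpha-1}$ with probability $\frac{(\alpha-1)^\alpha m_\alpha}{\alpha^\alpha q^\alpha}$ and value $0$ otherwise is a valid probability distribution with $\alpha$th moment $m_\alpha$, and it satisfies $\mathbb{E}[\max(\tilde d - q, 0)] = \frac{m_\alpha}{\alpha}\left(\frac{\alpha-1}{\alpha q}\right)^{\alpha-1}$. -/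
open MeasureTheory Real

/-!
Write `p = qα/(α-1)`, so that the mass of the atom at `p` is `r = mα / p ^ α`. Then the `α`th
moment is `r p ^ α = mα`, and since `p - q = p / α` the stop-loss value is
`r (p - q) = mα / (α p ^ (α - 1))`, which is the claimed formula because `(α - 1)/(α q) = p⁻¹`.
The hypothesis on `q` says exactly `mα ^ (1/α) < p`, i.e. `r < 1`.
-/

section TwoPoint

variable {X : Type*} [MeasurableSpace X]

theorem isProbabilityMeasure_ofReal_smul_dirac_add_ofReal_smul_dirac (a b : X) {s t : ℝ}
    (hs : 0 ≤ s) (ht : 0 ≤ t) (hst : s + t = 1) :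
    IsProbabilityMeasure
      (ENNReal.ofReal s • Measure.dirac a + ENNReal.ofReal t • Measure.dirac b) := by
  constructor
  simp [← ENNReal.ofReal_add hs ht, hst]

theorem integral_ofReal_smul_dirac_add_ofReal_smul_dirac [MeasurableSingletonClass X]
    {E : Type*} [NormedAddCommGroup E] [NormedSpace ℝ E] [CompleteSpace E]
    (f : X → E) (a b : X) {s t : ℝ} (hs : 0 ≤ s) (ht : 0 ≤ t) :
    ∫ x, f x ∂(ENNReal.ofReal s • Measure.dirac a + ENNReal.ofReal t • Measure.dirac b) =
      s • f a + t • f b := by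
  have hfa : Integrable f (Measure.dirac a) := integrable_dirac enorm_lt_top
  have hfb : Integrable f (Measure.dirac b) := integrable_dirac enorm_lt_top
  rw [integral_add_measure (hfa.smul_measure ENNReal.ofReal_ne_top)
      (hfb.smul_measure ENNReal.ofReal_ne_top),
    integral_smul_measure, integral_smul_measure, integral_dirac, integral_dirac,
    ENNReal.toReal_ofReal hs, ENNReal.toReal_ofReal ht]

end TwoPoint

section Powers

variable {α q : ℝ}

theorem sub_one_rpow_mul_div_eq_div_rpow (hα : 1 < α) (hq : 0 < q) (m : ℝ) :
    (α - 1) ^ α * m / (α ^ α * q ^ α) = m / (q * α / (α - 1)) ^ α := by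
  have hα0 : 0 < α := by linarith
  have hα1 : 0 < α - 1 := by linarith
  rw [div_rpow (by positivity) hα1.le, mul_rpow hq.le hα0.le]
  have : 0 < (α - 1) ^ α := by positivity
  have : 0 < α ^ α := by positivity
  have : 0 < q ^ α := by positivity
  field_simp

theorem rpow_one_div_lt_mul_div_of_mul_rpow_one_div_lt {m : ℝ} (hα : 1 < α)
    (hq : (α - 1) / α * m ^ (1 / α) < q) :
    m ^ (1 / α) < q * α / (α - 1) := by
  have hα0 : 0 < α := by linarith
  rw [lt_div_iff₀ (by linarith)]
  calc m ^ (1 / α) * (α - 1) = (α - 1) / α * m ^ (1 / α) * α := by field_simp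
    _ < q * α := by gcongr

theorem div_rpow_lt_one_of_rpow_one_div_lt {m p : ℝ} (hα : 0 < α) (hm : 0 ≤ m)
    (hp : m ^ (1 / α) < p) : m / p ^ α < 1 := by
  have hp0 : 0 < p := (rpow_nonneg hm _).trans_lt hp
  rw [one_div, rpow_inv_lt_iff_of_pos hm hp0.le hα] at hp
  exact (div_lt_one (rpow_pos_of_pos hp0 α)).2 hp

theorem div_rpow_mul_div_eq {m p : ℝ} (hp : 0 < p) :
    m / p ^ α * (p / α) = m / α * p⁻¹ ^ (α - 1) := by
  rw [inv_rpow hp.le, rpow_sub_one hp.ne']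
  have : 0 < p ^ α := rpow_pos_of_pos hp α
  field_simp

end Powers

theorem grundy_two_point_distribution
    (α mα q : ℝ) (hα : 1 < α) (hm : 0 < mα)
    (hq : (α - 1) / α * mα ^ (1 / α) < q) :
    let r : ℝ := (α - 1) ^ α * mα / (α ^ α * q ^ α)
    let μ : Measure ℝ :=
      ENNReal.ofReal r • Measure.dirac (q * α / (α - 1)) +
        ENNReal.ofReal (1 - r) • Measure.dirac 0
    0 ≤ r ∧ r < 1 ∧ IsProbabilityMeasure μ ∧
      (∫ x, x ^ α ∂μ) = mα ∧
      (∫ x, max (x - q) 0 ∂μ) = mα / α * ((α - 1) / (α * q)) ^ (α - 1) := by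
  intro r μ
  have hα0 : 0 < α := by linarith
  have hα1 : 0 < α - 1 := by linarith
  have hq0 : 0 < q := lt_of_le_of_lt (by positivity) hq
  set p := q * α / (α - 1) with hp_def
  have hp0 : 0 < p := by positivity
  have hr : r = mα / p ^ α := sub_one_rpow_mul_div_eq_div_rpow hα hq0 mα
  have hr0 : 0 ≤ r := hr ▸ by positivity
  have hr1 : r < 1 :=
    hr ▸ div_rpow_lt_one_of_rpow_one_div_lt hα0 hm.le
      (rpow_one_div_lt_mul_div_of_mul_rpow_one_div_lt hα hq)
  have hpq : p - q = p / α := by rw [hp_def]; field_simp; ring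
  have hinv : (α - 1) / (α * q) = p⁻¹ := by rw [hp_def, inv_div, mul_comm q]
  refine ⟨hr0, hr1,
    isProbabilityMeasure_ofReal_smul_dirac_add_ofReal_smul_dirac _ _ hr0 (by linarith)
      (by ring), ?_, ?_⟩
  · rw [integral_ofReal_smul_dirac_add_ofReal_smul_dirac _ _ _ hr0 (by linarith), hr,
      zero_rpow hα0.ne', smul_eq_mul, smul_eq_mul, mul_zero, add_zero,
      div_mul_cancel₀ _ (rpow_pos_of_pos hp0 α).ne']
  · rw [integral_ofReal_smul_dirac_add_ofReal_smul_dirac _ _ _ hr0 (by linarith), hpq,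
      zero_sub, max_eq_left (by positivity), max_eq_right (by linarith), smul_eq_mul,
      smul_eq_mul, mul_zero, add_zero, hr, hinv, div_rpow_mul_div_eq hp0]
end

section
/- Let $\alpha > 1$, $m_1 > 0$, $m_\alpha > m_1^\alpha$, and $q > \left(\frac{m_\alpha - m_1^\alpha}{m_1}\left(\frac{\alpha-1}{\alpha}\right)^{\alpha-1} + m_1^{\alpha-1}\right)^{1/(\alpha-1)}$. Then with $p = \left(m_1 - \frac{(m_\alpha-m_1^\alpha)(\alpha-1)^{\alpha-1}}{\alpha^{\alpha-1}q^{\alpha-1}}\right)^{\alpha/(\alpha-1)} m_1^{-\alpha/(\alpha-1)}$ and $r = \frac{(m_\alpha - m_1^\alpha)(\alpha-1)^\alpha}{\alpha^\alpha q^\alpha}$, we have $0 < p < 1$, $0 < r < 1$, and $p + r < 1$. -/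
/-!
Put `β = α - 1`, `t = (mα - m1^α) / m1 * (β/α)^β` and `x = t / q^β`. The hypothesis on `q` says
`t + m1^β < q^β`, hence `0 < x < 1` and `m1 < q`. In terms of `x`, `p = (1 - x)^(α/β) < 1 - x`
because the exponent exceeds one, and `r = x * (β m1) / (α q) < x`; so `p + r < 1`.
-/

open Real

namespace Real

theorem lt_rpow_of_rpow_one_div_lt {s q β : ℝ} (hs : 0 ≤ s) (hβ : 0 < β)
    (h : s ^ (1 / β) < q) : s < q ^ β := by
  have hq : 0 ≤ q := (rpow_nonneg hs _).trans h.le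
  rwa [one_div, rpow_inv_lt_iff_of_pos hs hq hβ] at h

theorem lt_and_lt_rpow_of_add_rpow_rpow_one_div_lt {t m q β : ℝ} (ht : 0 ≤ t) (hm : 0 < m)
    (hβ : 0 < β) (h : (t + m ^ β) ^ (1 / β) < q) : m < q ∧ t < q ^ β := by
  have hs := lt_rpow_of_rpow_one_div_lt (by positivity) hβ h
  have hq : 0 ≤ q := (rpow_nonneg (by positivity) _).trans h.le
  exact ⟨(rpow_lt_rpow_iff hm.le hq hβ).1 (by linarith), by linarith [rpow_pos_of_pos hm β]⟩

theorem mul_rpow_mul_rpow_neg {m c : ℝ} (hm : 0 < m) (hc : 0 ≤ c) (γ : ℝ) :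
    (m * c) ^ γ * m ^ (-γ) = c ^ γ := by
  rw [mul_rpow hm.le hc, rpow_neg hm.le]
  field_simp [(rpow_pos_of_pos hm γ).ne']

theorem mul_rpow_div_mul_rpow_eq_sub_one {D a b q s : ℝ} (ha : 0 < a) (hb : 0 < b) (hq : 0 < q) :
    D * b ^ s / (a ^ s * q ^ s)
      = D * b ^ (s - 1) / (a ^ (s - 1) * q ^ (s - 1)) * (b / (a * q)) := by
  rw [rpow_sub_one ha.ne', rpow_sub_one hb.ne', rpow_sub_one hq.ne']
  field_simp [(rpow_pos_of_pos ha s).ne', (rpow_pos_of_pos hq s).ne']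

theorem one_sub_rpow_add_lt_one {x y γ : ℝ} (hx0 : 0 < x) (hx1 : x < 1) (hγ : 1 < γ)
    (hy : y < x) : (1 - x) ^ γ + y < 1 := by
  have := rpow_lt_self_of_lt_one (sub_pos.2 hx1) (by linarith) hγ
  linarith

end Real

theorem three_point_probability_validity
    (α m1 mα q : ℝ) (hα : 1 < α) (hm1 : 0 < m1) (h1 : m1 ^ α < mα)
    (hq : ((mα - m1 ^ α) / m1 * ((α - 1) / α) ^ (α - 1) + m1 ^ (α - 1)) ^ (1 / (α - 1)) < q) :
    let p : ℝ := (m1 - (mα - m1 ^ α) * (α - 1) ^ (α - 1) / (α ^ (α - 1) * q ^ (α - 1)))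
        ^ (α / (α - 1)) * m1 ^ (-(α / (α - 1)))
    let r : ℝ := (mα - m1 ^ α) * (α - 1) ^ α / (α ^ α * q ^ α)
    0 < p ∧ p < 1 ∧ 0 < r ∧ r < 1 ∧ p + r < 1 := by
  intro p r
  have hβ : 0 < α - 1 := by linarith
  have hD : 0 < mα - m1 ^ α := by linarith
  set t := (mα - m1 ^ α) / m1 * ((α - 1) / α) ^ (α - 1)
  have ht : 0 < t := by positivity
  obtain ⟨hm1q, htq⟩ := lt_and_lt_rpow_of_add_rpow_rpow_one_div_lt ht.le hm1 hβ hq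
  have hq0 : 0 < q := hm1.trans hm1q
  set x := t / q ^ (α - 1)
  have hx0 : 0 < x := by positivity
  have hx1 : x < 1 := (div_lt_one (by positivity)).2 htq
  have hA : (mα - m1 ^ α) * (α - 1) ^ (α - 1) / (α ^ (α - 1) * q ^ (α - 1)) = m1 * x := by
    simp only [x, t, div_rpow hβ.le (by positivity : (0 : ℝ) ≤ α)]
    field_simp
  have hp : p = (1 - x) ^ (α / (α - 1)) := by
    simp only [p, hA, ← mul_one_sub]
    exact mul_rpow_mul_rpow_neg hm1 (by linarith) _
  have hr : r = x * (m1 * (α - 1) / (α * q)) := by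
    simp only [r]
    rw [mul_rpow_div_mul_rpow_eq_sub_one (by positivity) hβ hq0, hA]
    ring
  have hr_lt : r < x := by
    rw [hr, mul_lt_iff_lt_one_right hx0, div_lt_one (by positivity)]
    nlinarith
  have hγ : 1 < α / (α - 1) := (one_lt_div hβ).2 (by linarith)
  refine ⟨?_, ?_, ?_, hr_lt.trans hx1, ?_⟩
  · rw [hp]; exact rpow_pos_of_pos (by linarith) _
  · rw [hp]; exact rpow_lt_one (by linarith) (by linarith) (by linarith)
  · rw [hr]; positivity
  · rw [hp]; exact one_sub_rpow_add_lt_one hx0 hx1 hγ hr_lt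
end

section
/- Let $\alpha > 2$, $m_1 > 0$, and set $C = m_1(\alpha-1)/\alpha$. Define $\triangle(q) = \left(\frac{q}{C}\right)^\alpha - \alpha\frac{q}{C} + 1 - \left(\left(\frac{q}{C}\right)^{\alpha-1} - \alpha + 1\right)^{\alpha/(\alpha-1)}$. Then $\triangle(\alpha^{1/(\alpha-1)}C) = 0$ and $\triangle(q) > 0$ for all $q > \alpha^{1/(\alpha-1)}C$. -/
/-!
In the variable `u = q / C` the gap is `dualGap α u`. At `u₀ = α ^ (1 / (α - 1))` we have
`u₀ ^ (α - 1) = α`, so both the polynomial part and the bracket vanish. Its derivative is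
`α (u^(α-1) - 1 - u^(α-2) (u^(α-1) - α + 1)^(1/(α-1)))`; raising to the power `α - 1` and putting
`v = u ^ (α - 1)`, positivity becomes `v^(α-2) (v - α + 1) < (v - 1)^(α-1)`, which is Bernoulli's
inequality `1 - (α - 1)/v < (1 - 1/v)^(α-1)` multiplied by `v^(α-1)`. Hence the gap is strictly
increasing beyond `u₀`.
-/

open Real Set

noncomputable def dualGap (α u : ℝ) : ℝ :=
  u ^ α - α * u + 1 - (u ^ (α - 1) - α + 1) ^ (α / (α - 1))

theorem rpow_sub_one_mul_sub_lt_sub_one_rpow {p v : ℝ} (hp : 1 < p) (hv : 1 ≤ v) :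
    v ^ (p - 1) * (v - p) < (v - 1) ^ p := by
  have hv₀ : 0 < v := by linarith
  have hinv : v⁻¹ ≤ 1 := inv_le_one_of_one_le₀ hv
  have bernoulli : 1 + p * -v⁻¹ < (1 + -v⁻¹) ^ p :=
    one_add_mul_self_lt_rpow_one_add (by linarith) (by simp [hv₀.ne']) hp
  have hvp : 0 < v ^ p := rpow_pos_of_pos hv₀ p
  calc v ^ (p - 1) * (v - p) = (1 + p * -v⁻¹) * v ^ p := by
        rw [rpow_sub_one hv₀.ne']; field_simp; ring
    _ < (1 + -v⁻¹) ^ p * v ^ p := mul_lt_mul_of_pos_right bernoulli hvp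
    _ = (v - 1) ^ p := by
        rw [← mul_rpow (by linarith) hv₀.le]; congr 1; field_simp; ring

theorem rpow_one_div_sub_one_rpow {α : ℝ} (hα : 1 < α) : (α ^ (1 / (α - 1))) ^ (α - 1) = α := by
  rw [one_div, rpow_inv_rpow (by linarith) (by linarith)]

theorem dualGap_rpow_one_div_sub_one {α : ℝ} (hα : 1 < α) : dualGap α (α ^ (1 / (α - 1))) = 0 := by
  set u₀ := α ^ (1 / (α - 1))
  have hpow : u₀ ^ (α - 1) = α := rpow_one_div_sub_one_rpow hα
  have hpow' : u₀ ^ α = α * u₀ := by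
    conv_lhs => rw [← sub_add_cancel α 1]
    rw [rpow_add_one (rpow_pos_of_pos (by linarith) _).ne', hpow]
  rw [dualGap, hpow, hpow']
  simp

theorem hasDerivAt_dualGap {α : ℝ} (hα : 2 ≤ α) (u : ℝ) :
    HasDerivAt (dualGap α)
      (α * (u ^ (α - 1) - 1 - u ^ (α - 2) * (u ^ (α - 1) - α + 1) ^ (1 / (α - 1)))) u := by
  have hα₁ : α - 1 ≠ 0 := by linarith
  -- all exponents are `≥ 1`, so the power rule needs no condition on the bases
  have hpow : HasDerivAt (fun u : ℝ => u ^ α) (α * u ^ (α - 1)) u :=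
    hasDerivAt_rpow_const (Or.inr (by linarith))
  have hpow' : HasDerivAt (fun u : ℝ => u ^ (α - 1)) ((α - 1) * u ^ (α - 2)) u := by
    convert hasDerivAt_rpow_const (x := u) (p := α - 1) (Or.inr (by linarith)) using 3; ring
  have hexp : 1 ≤ α / (α - 1) := by rw [le_div_iff₀ (by linarith)]; linarith
  have hexp' : α / (α - 1) - 1 = 1 / (α - 1) := by field_simp; ring
  refine (((hpow.sub ((hasDerivAt_id u).const_mul α)).add_const 1).sub
    (((hpow'.sub_const α).add_const 1).rpow_const (Or.inr hexp))).congr_deriv ?_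
  rw [hexp']
  field_simp

theorem rpow_sub_two_mul_rpow_lt {α u : ℝ} (hα : 2 < α) (hu : α ^ (1 / (α - 1)) < u) :
    u ^ (α - 2) * (u ^ (α - 1) - α + 1) ^ (1 / (α - 1)) < u ^ (α - 1) - 1 := by
  have hα₁ : 0 < α - 1 := by linarith
  have hu₀ : 0 < u := (rpow_pos_of_pos (by linarith) _).trans hu
  set v := u ^ (α - 1) with hv_def
  have hv : α < v :=
    (rpow_one_div_sub_one_rpow (by linarith)).symm.trans_lt
      (rpow_lt_rpow (rpow_pos_of_pos (by linarith) _).le hu hα₁)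
  have hlhs : (u ^ (α - 2) * (v - α + 1) ^ (1 / (α - 1))) ^ (α - 1)
      = v ^ (α - 1 - 1) * (v - (α - 1)) := by
    rw [mul_rpow (by positivity) (rpow_nonneg (by linarith) _), ← rpow_mul hu₀.le,
      ← rpow_mul (by linarith), one_div_mul_cancel hα₁.ne', rpow_one, hv_def, ← rpow_mul hu₀.le]
    ring_nf
  rw [← rpow_lt_rpow_iff (by positivity) (by linarith) hα₁, hlhs]
  exact rpow_sub_one_mul_sub_lt_sub_one_rpow (by linarith) (by linarith)

theorem strictMonoOn_dualGap {α : ℝ} (hα : 2 < α) :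
    StrictMonoOn (dualGap α) (Ici (α ^ (1 / (α - 1)))) := by
  refine strictMonoOn_of_hasDerivWithinAt_pos (convex_Ici _)
    (fun u _ ↦ (hasDerivAt_dualGap hα.le u).continuousAt.continuousWithinAt)
    (fun u _ ↦ (hasDerivAt_dualGap hα.le u).hasDerivWithinAt) fun u hu ↦ ?_
  rw [interior_Ici] at hu
  have hcore := rpow_sub_two_mul_rpow_lt hα hu
  exact mul_pos (by linarith) (by linarith)

theorem dual_gap_positive_alpha_gt_two
    (α m1 : ℝ) (hα : 2 < α) (hm1 : 0 < m1) :
    let C : ℝ := m1 * (α - 1) / α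
    let Δ : ℝ → ℝ := fun q =>
      (q / C) ^ α - α * (q / C) + 1 - ((q / C) ^ (α - 1) - α + 1) ^ (α / (α - 1))
    Δ (α ^ (1 / (α - 1)) * C) = 0 ∧ ∀ q : ℝ, α ^ (1 / (α - 1)) * C < q → 0 < Δ q := by
  intro C Δ
  have hC : 0 < C := div_pos (mul_pos hm1 (by linarith)) (by linarith)
  have hΔ : ∀ q, Δ q = dualGap α (q / C) := fun q ↦ rfl
  have hzero := dualGap_rpow_one_div_sub_one (by linarith : 1 < α)
  refine ⟨by rw [hΔ, mul_div_cancel_right₀ _ hC.ne', hzero], fun q hq ↦ ?_⟩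
  have hu : α ^ (1 / (α - 1)) < q / C := (lt_div_iff₀ hC).2 hq
  rw [hΔ, ← hzero]
  exact strictMonoOn_dualGap hα self_mem_Ici hu.le hu
end

section
/- Let $\tilde d^*$ be a nonnegative random variable with distribution $F^*$ and survival function $\overline{F}^* = 1 - F^*$, and suppose there exist constants $C_1 > 0$, $C_2 > 0$, $\alpha > 1$, and $Q > 0$ such that for all $q > Q$: $C_1 q^{-(\alpha-1)} \leq \mathbb{E}[\max(\tilde d^* - q, 0)] \leq C_1 q^{-(\alpha-1)}(1 - C_2 q^{-(\alpha-1)})^{-1}$. Then there exists $C_3 > 0$ such that $\overline{F}^*(q) \geq C_3 q^{-\alpha}$ for all sufficiently large $q$, and consequently $\mathbb{E}[(\tilde d^*)^\alpha] = \infty$. -/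
/-! Write `E q = ∫ max (x - q) 0 ∂μ`. Pointwise, `E q - E (2q) ≤ q μ(q, ∞)`, and the two-sided
bound caps `E (2q)` for large `q` at the fraction `(1 + 2^{1-α}) / 2 < 1` of the lower bound
`C1 q^{1-α}` on `E q`, so the tail is at least a constant times `q^{-α}`. For the moment,
`E q ≤ q^{1-α} ∫_{(q,∞)} x^α dμ` keeps these tail integrals above `C1`, whereas they would tend
to `0` if the `α`-th moment were finite. -/

open MeasureTheory Real Filter Topology Set

lemma tendsto_measure_Ioi_atTop (ν : Measure ℝ) [IsFiniteMeasure ν] :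
    Tendsto (fun q => ν (Ioi q)) atTop (𝓝 0) := by
  have h := tendsto_measure_iInter_atTop (μ := ν) (fun q => measurableSet_Ioi.nullMeasurableSet)
    antitone_Ioi ⟨0, measure_ne_top ν _⟩
  have hempty : ⋂ q : ℝ, Ioi q = ∅ := iInter_eq_empty_iff.2 fun x => ⟨x, lt_irrefl x⟩
  rwa [hempty, measure_empty] at h

lemma exists_eventually_rpow_le_sub_two_mul {E : ℝ → ℝ} {C1 C2 β : ℝ} (hC1 : 0 < C1) (hβ : 0 < β)
    (hlb : ∀ᶠ q in atTop, C1 * q ^ (-β) ≤ E q)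
    (hub : ∀ᶠ q in atTop, E q ≤ C1 * q ^ (-β) * (1 - C2 * q ^ (-β))⁻¹) :
    ∃ C > 0, ∀ᶠ q in atTop, C * q ^ (-β) ≤ E q - E (2 * q) := by
  set c : ℝ := 2 ^ (-β)
  have hc0 : 0 < c := by positivity
  have hc1 : c < 1 := rpow_lt_one_of_one_lt_of_neg one_lt_two (neg_lt_zero.2 hβ)
  have htwo : Tendsto (fun q : ℝ => 2 * q) atTop atTop := tendsto_id.const_mul_atTop two_pos
  have hcorrection : Tendsto (fun q => (1 - C2 * (2 * q) ^ (-β))⁻¹) atTop (𝓝 1) := by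
    have h := (((tendsto_rpow_neg_atTop hβ).comp htwo).const_mul C2).const_sub 1
    simpa using h.inv₀ (by simp)
  have hK : 1 < (1 + c) / (2 * c) := by rw [one_lt_div (by positivity)]; linarith
  refine ⟨C1 * (1 - c) / 2, by nlinarith, ?_⟩
  filter_upwards [hlb, htwo.eventually hub, hcorrection.eventually_le_const hK,
    eventually_gt_atTop 0] with q hq h2q hcorr hq0
  have ht : 0 < q ^ (-β) := rpow_pos_of_pos hq0 _
  have hscale : (2 * q) ^ (-β) = c * q ^ (-β) := mul_rpow two_pos.le hq0.le
  have h2q' : E (2 * q) ≤ C1 * q ^ (-β) * ((1 + c) / 2) :=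
    calc E (2 * q) ≤ C1 * (2 * q) ^ (-β) * (1 - C2 * (2 * q) ^ (-β))⁻¹ := h2q
      _ ≤ C1 * (c * q ^ (-β)) * ((1 + c) / (2 * c)) := by
        rw [← hscale]
        exact mul_le_mul_of_nonneg_left hcorr (by positivity)
      _ = C1 * q ^ (-β) * ((1 + c) / 2) := by field_simp
  nlinarith

section StopLoss

variable {μ : Measure ℝ}

lemma integral_max_sub_sub_integral_max_sub_le [IsFiniteMeasure μ] {a b : ℝ} (hab : a ≤ b)
    (ha : Integrable (fun x => max (x - a) 0) μ) (hb : Integrable (fun x => max (x - b) 0) μ) :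
    ∫ x, max (x - a) 0 ∂μ - ∫ x, max (x - b) 0 ∂μ ≤ (b - a) * μ.real (Ioi a) := by
  have hpointwise : ∀ x, max (x - a) 0 - max (x - b) 0 ≤ (Ioi a).indicator (fun _ => b - a) x := by
    intro x
    by_cases hx : a < x
    · rw [indicator_of_mem (mem_Ioi.2 hx), max_eq_left (by linarith)]
      linarith [le_max_left (x - b) 0]
    · rw [indicator_of_notMem (notMem_Ioi.2 (not_lt.1 hx)), max_eq_right (by linarith),
        max_eq_right (by linarith), sub_zero]
  calc ∫ x, max (x - a) 0 ∂μ - ∫ x, max (x - b) 0 ∂μ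
      = ∫ x, (max (x - a) 0 - max (x - b) 0) ∂μ := (integral_sub ha hb).symm
    _ ≤ ∫ x, (Ioi a).indicator (fun _ => b - a) x ∂μ :=
      integral_mono (ha.sub hb) ((integrable_const _).indicator measurableSet_Ioi) hpointwise
    _ = (b - a) * μ.real (Ioi a) := by
      rw [integral_indicator_const _ measurableSet_Ioi, smul_eq_mul, mul_comm]

lemma lintegral_max_sub_le_rpow_mul_setLIntegral_rpow {α q : ℝ} (hα : 1 ≤ α) (hq : 0 < q) :
    ∫⁻ x, ENNReal.ofReal (max (x - q) 0) ∂μ ≤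
      ENNReal.ofReal (q ^ (-(α - 1))) * ∫⁻ x in Ioi q, ENNReal.ofReal (x ^ α) ∂μ := by
  have hpointwise : ∀ x, ENNReal.ofReal (max (x - q) 0) ≤
      (Ioi q).indicator (fun x => ENNReal.ofReal (q ^ (-(α - 1))) * ENNReal.ofReal (x ^ α)) x := by
    intro x
    by_cases hx : q < x
    · have hx0 : 0 < x := hq.trans hx
      rw [indicator_of_mem (mem_Ioi.2 hx), ← ENNReal.ofReal_mul (rpow_nonneg hq.le _)]
      refine ENNReal.ofReal_le_ofReal (max_le ?_ ?_)
      · calc x - q ≤ x ^ (-(α - 1)) * x ^ α := by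
              rw [← rpow_add hx0, show -(α - 1) + α = 1 by ring, rpow_one]
              linarith
          _ ≤ q ^ (-(α - 1)) * x ^ α :=
              mul_le_mul_of_nonneg_right (rpow_le_rpow_of_nonpos hq hx.le (by linarith))
                (rpow_nonneg hx0.le _)
      · positivity
    · rw [max_eq_right (by linarith), ENNReal.ofReal_zero]
      exact zero_le
  calc ∫⁻ x, ENNReal.ofReal (max (x - q) 0) ∂μ
      ≤ ∫⁻ x, (Ioi q).indicator
          (fun x => ENNReal.ofReal (q ^ (-(α - 1))) * ENNReal.ofReal (x ^ α)) x ∂μ :=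
        lintegral_mono hpointwise
    _ = ENNReal.ofReal (q ^ (-(α - 1))) * ∫⁻ x in Ioi q, ENNReal.ofReal (x ^ α) ∂μ := by
      rw [lintegral_indicator measurableSet_Ioi, lintegral_const_mul' _ _ ENNReal.ofReal_ne_top]

lemma lintegral_rpow_eq_top_of_rpow_le_integral_max_sub [IsFiniteMeasure μ] {C α : ℝ}
    (hC : 0 < C) (hα : 1 ≤ α) (hint : ∀ q, Integrable (fun x => max (x - q) 0) μ)
    (hlb : ∀ᶠ q in atTop, C * q ^ (-(α - 1)) ≤ ∫ x, max (x - q) 0 ∂μ) :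
    ∫⁻ x, ENNReal.ofReal (x ^ α) ∂μ = ⊤ := by
  by_contra hfin
  have htail := tendsto_setLIntegral_zero hfin (tendsto_measure_Ioi_atTop μ)
  have hbound : ∀ᶠ q in atTop, ENNReal.ofReal C ≤ ∫⁻ x in Ioi q, ENNReal.ofReal (x ^ α) ∂μ := by
    filter_upwards [hlb, eventually_gt_atTop 0] with q hq hq0
    have ht : 0 < q ^ (-(α - 1)) := rpow_pos_of_pos hq0 _
    refine (ENNReal.mul_le_mul_iff_right (ENNReal.ofReal_pos.2 ht).ne' ENNReal.ofReal_ne_top).1 ?_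
    calc ENNReal.ofReal (q ^ (-(α - 1))) * ENNReal.ofReal C
        = ENNReal.ofReal (C * q ^ (-(α - 1))) := by
          rw [← ENNReal.ofReal_mul ht.le, mul_comm]
      _ ≤ ENNReal.ofReal (∫ x, max (x - q) 0 ∂μ) := ENNReal.ofReal_le_ofReal hq
      _ = ∫⁻ x, ENNReal.ofReal (max (x - q) 0) ∂μ :=
          ofReal_integral_eq_lintegral_ofReal (hint q) (.of_forall fun _ => le_max_right _ _)
      _ ≤ _ := lintegral_max_sub_le_rpow_mul_setLIntegral_rpow hα hq0
  have hzero : ENNReal.ofReal C ≤ 0 := ge_of_tendsto htail hbound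
  exact (ENNReal.ofReal_pos.2 hC).not_ge hzero

end StopLoss

theorem tail_lower_bound_and_infinite_alpha_moment_general
    (μ : Measure ℝ) (hprob : IsProbabilityMeasure μ)
    (C1 C2 α Q : ℝ) (hC1 : 0 < C1) (hα : 1 < α)
    (hint : ∀ q : ℝ, Integrable (fun x => max (x - q) 0) μ)
    (hlb : ∀ q : ℝ, Q < q → C1 * q ^ (-(α - 1)) ≤ ∫ x, max (x - q) 0 ∂μ)
    (hub : ∀ q : ℝ, Q < q →
      (∫ x, max (x - q) 0 ∂μ) ≤ C1 * q ^ (-(α - 1)) * (1 - C2 * q ^ (-(α - 1)))⁻¹) :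
    (∃ C3 : ℝ, 0 < C3 ∧ ∃ Q' : ℝ, ∀ q : ℝ, Q' < q →
        C3 * q ^ (-α) ≤ (μ (Set.Ioi q)).toReal) ∧
      (∫⁻ x, ENNReal.ofReal (x ^ α) ∂μ) = ⊤ := by
  have hlb' : ∀ᶠ q in atTop, C1 * q ^ (-(α - 1)) ≤ ∫ x, max (x - q) 0 ∂μ :=
    eventually_gt_atTop Q |>.mono hlb
  refine ⟨?_, lintegral_rpow_eq_top_of_rpow_le_integral_max_sub hC1 hα.le hint hlb'⟩
  obtain ⟨C3, hC3, hgap⟩ := exists_eventually_rpow_le_sub_two_mul hC1 (sub_pos.2 hα) hlb'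
    (eventually_gt_atTop Q |>.mono hub)
  obtain ⟨Q', hQ'⟩ := eventually_atTop.1 (hgap.and (eventually_gt_atTop 0))
  refine ⟨C3, hC3, Q', fun q hq => ?_⟩
  obtain ⟨hgap_q, hq0⟩ := hQ' q hq.le
  have htail := integral_max_sub_sub_integral_max_sub_le (by linarith) (hint q) (hint (2 * q))
  rw [show 2 * q - q = q by ring] at htail
  rw [show -(α - 1) = -α + 1 by ring, rpow_add_one hq0.ne'] at hgap_q
  exact le_of_mul_le_mul_right (by linarith : C3 * q ^ (-α) * q ≤ μ.real (Ioi q) * q) hq0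

theorem tail_lower_bound_and_infinite_alpha_moment
    (μ : Measure ℝ) (hprob : IsProbabilityMeasure μ) (hsupp : μ (Set.Iio 0) = 0)
    (C1 C2 α Q : ℝ) (hC1 : 0 < C1) (hC2 : 0 < C2) (hα : 1 < α) (hQ : 0 < Q)
    (hint : ∀ q : ℝ, Integrable (fun x => max (x - q) 0) μ)
    (hlb : ∀ q : ℝ, Q < q → C1 * q ^ (-(α - 1)) ≤ ∫ x, max (x - q) 0 ∂μ)
    (hub : ∀ q : ℝ, Q < q →
      (∫ x, max (x - q) 0 ∂μ) ≤ C1 * q ^ (-(α - 1)) * (1 - C2 * q ^ (-(α - 1)))⁻¹) :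
    (∃ C3 : ℝ, 0 < C3 ∧ ∃ Q' : ℝ, ∀ q : ℝ, Q' < q →
        C3 * q ^ (-α) ≤ (μ (Set.Ioi q)).toReal) ∧
      (∫⁻ x, ENNReal.ofReal (x ^ α) ∂μ) = ⊤ :=
  tail_lower_bound_and_infinite_alpha_moment_general μ hprob C1 C2 α Q hC1 hα hint hlb hub
end

section
/- Let $\tilde d^*$ be a nonnegative random variable whose survival function $\overline{F}^*$ is regularly varying at infinity with index $-\alpha$ for some $\alpha > 1$, and for $\eta \in (0,1)$ let $q^*_\eta$ satisfy $\mathbb{P}(\tilde d^* > q^*_\eta) = 1 - \eta$ and let $C^*_\eta = (1-\eta)q^*_\eta + \mathbb{E}[\max(\tilde d^* - q^*_\eta, 0)]$. Then $\lim_{\eta \uparrow 1} \frac{C^*_\eta}{(1-\eta)q^*_\eta} = \frac{\alpha}{\alpha - 1}$, equivalently $q^*_\eta \sim \frac{\alpha-1}{\alpha}\cdot\frac{C^*_\eta}{1-\eta}$ as $\eta \to 1$. -/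
/-!
The survival function `F x = μ (Ioi x)` is antitone and, being regularly varying, positive; since
`F (q_η) = 1 - η → 0`, the quantile `q_η` tends to infinity. By the layer-cake formula the expected
overage is `∫_{q}^∞ F`, so the cost ratio is `1 + (∫_{q}^∞ F) / (q F(q))`. Substituting `t = q s`,
this quotient is `∫_1^∞ F(q s) / F(q) ds`, which tends to `∫_1^∞ s^(-α) ds = 1 / (α - 1)` by
dominated convergence (Karamata). The dominating function `2^β s^(-β)`, for some `1 < β < α`,
is a Potter bound, obtained by iterating `F(2x) ≤ 2^(-β) F(x)` for large `x` along powers of `2`.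
-/

open MeasureTheory Real Filter Set Topology

def IsRegularlyVarying (F : ℝ → ℝ) (ρ : ℝ) : Prop :=
  ∀ t : ℝ, 0 < t → Tendsto (fun x => F (t * x) / F x) atTop (𝓝 (t ^ ρ))

section StopLoss

variable (μ : Measure ℝ) (q : ℝ)

theorem lintegral_max_sub_zero_eq_setLIntegral_Ioi :
    ∫⁻ x, ENNReal.ofReal (max (x - q) 0) ∂μ = ∫⁻ t in Ioi q, μ (Ioi t) := by
  have hnn : 0 ≤ᵐ[μ] fun x => max (x - q) 0 := .of_forall fun x => le_max_right _ _
  have hmeas : AEMeasurable (fun x => max (x - q) 0) μ := by fun_prop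
  have hlevel : ∀ t ∈ Ioi (0 : ℝ), μ {x | t < max (x - q) 0} = μ (Ioi (q + t)) := by
    intro t (ht : 0 < t)
    congr 1
    ext x
    simp only [mem_ofPred_eq, mem_Ioi, lt_max_iff]
    constructor
    · rintro (h | h) <;> linarith
    · intro h; left; linarith
  rw [lintegral_eq_lintegral_meas_lt μ hnn hmeas, setLIntegral_congr_fun measurableSet_Ioi hlevel,
    (measurePreserving_add_left volume q).setLIntegral_comp_emb (measurableEmbedding_addLeft q)
      (fun t => μ (Ioi t)),
    image_const_add_Ioi, add_zero]

theorem integral_max_sub_zero_eq_setIntegral_Ioi [IsFiniteMeasure μ] :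
    ∫ x, max (x - q) 0 ∂μ = ∫ t in Ioi q, μ.real (Ioi t) := by
  rw [integral_eq_lintegral_of_nonneg_ae (f := fun x => max (x - q) 0)
      (.of_forall fun x => le_max_right _ _) (by fun_prop),
    integral_eq_lintegral_of_nonneg_ae (.of_forall fun t => measureReal_nonneg)
      (Antitone.measurable fun a b hab => measureReal_mono (Ioi_subset_Ioi hab)).aestronglyMeasurable,
    lintegral_max_sub_zero_eq_setLIntegral_Ioi]
  simp only [measureReal_def, ENNReal.ofReal_toReal (measure_ne_top μ _)]

end StopLoss

section RegularVariation

variable {F : ℝ → ℝ}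

theorem IsRegularlyVarying.pos_of_antitone {ρ : ℝ} (hF : IsRegularlyVarying F ρ)
    (hanti : Antitone F) (hnn : 0 ≤ F) (x : ℝ) : 0 < F x := by
  -- Otherwise `F y / F y = 0 / 0 = 0` for large `y`, against the limit `1 ^ ρ = 1`.
  by_contra hx
  have hzero : ∀ y ≥ x, F y = 0 := fun y hy =>
    le_antisymm ((hanti hy).trans (not_lt.mp hx)) (hnn y)
  have hratio : Tendsto (fun y => F (1 * y) / F y) atTop (𝓝 0) :=
    tendsto_const_nhds.congr' <| (eventually_ge_atTop x).mono fun y hy => by simp [hzero y hy]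
  simpa using tendsto_nhds_unique (hF 1 one_pos) hratio

theorem Antitone.tendsto_atTop_of_tendsto_nhds_zero {ι : Type*} {l : Filter ι} {g : ι → ℝ}
    (hanti : Antitone F) (hpos : ∀ x, 0 < F x) (h : Tendsto (F ∘ g) l (𝓝 0)) :
    Tendsto g l atTop :=
  tendsto_atTop.2 fun M => (h.eventually (gt_mem_nhds (hpos M))).mono fun _ hi =>
    le_of_not_gt fun hlt => (hanti hlt.le).not_gt hi

theorem pow_mul_le_of_forall_le_mul {b c x₀ : ℝ} (hb : 1 ≤ b) (hc : 0 ≤ c) (hx₀ : 0 ≤ x₀)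
    (hstep : ∀ x ≥ x₀, F (b * x) ≤ c * F x) (k : ℕ) {x : ℝ} (hx : x₀ ≤ x) :
    F (b ^ k * x) ≤ c ^ k * F x := by
  induction k with
  | zero => simp
  | succ k ih =>
    have hbk : x₀ ≤ b ^ k * x := hx.trans (le_mul_of_one_le_left (hx₀.trans hx) (one_le_pow₀ hb))
    calc F (b ^ (k + 1) * x) = F (b * (b ^ k * x)) := by rw [pow_succ', mul_assoc]
      _ ≤ c * F (b ^ k * x) := hstep _ hbk
      _ ≤ c * (c ^ k * F x) := mul_le_mul_of_nonneg_left ih hc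
      _ = c ^ (k + 1) * F x := by ring

theorem Antitone.le_rpow_mul_of_forall_le_mul {b β x₀ : ℝ} (hanti : Antitone F) (hnn : 0 ≤ F)
    (hb : 1 < b) (hβ : 0 ≤ β) (hx₀ : 0 ≤ x₀) (hstep : ∀ x ≥ x₀, F (b * x) ≤ b ^ (-β) * F x)
    {x s : ℝ} (hx : x₀ ≤ x) (hs : 1 ≤ s) :
    F (x * s) ≤ b ^ β * s ^ (-β) * F x := by
  obtain ⟨k, hks, hsk⟩ := exists_nat_pow_near hs hb
  have hb0 : 0 < b := by linarith
  have hs0 : 0 < s := by linarith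
  have hsb : s / b ≤ b ^ k := by rw [div_le_iff₀ hb0, ← pow_succ]; exact hsk.le
  calc F (x * s) ≤ F (b ^ k * x) := hanti <| by
        rw [mul_comm]; exact mul_le_mul_of_nonneg_left hks (hx₀.trans hx)
    _ ≤ (b ^ (-β)) ^ k * F x :=
        pow_mul_le_of_forall_le_mul hb.le (by positivity) hx₀ hstep k hx
    _ = (b ^ k) ^ (-β) * F x := by
        rw [← rpow_natCast, ← rpow_mul hb0.le, ← rpow_natCast, ← rpow_mul hb0.le, mul_comm (-β)]
    _ ≤ (s / b) ^ (-β) * F x :=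
        mul_le_mul_of_nonneg_right (rpow_le_rpow_of_nonpos (by positivity) hsb (by linarith))
          (hnn x)
    _ = b ^ β * s ^ (-β) * F x := by
        rw [div_rpow hs0.le hb0.le, rpow_neg hb0.le β, div_inv_eq_mul]; ring

theorem IsRegularlyVarying.eventually_le_rpow_mul {α β : ℝ} (hF : IsRegularlyVarying F (-α))
    (hanti : Antitone F) (hpos : ∀ x, 0 < F x) (hβ : 0 ≤ β) (hβα : β < α) :
    ∀ᶠ x in atTop, ∀ s ≥ 1, F (x * s) ≤ 2 ^ β * s ^ (-β) * F x := by
  have hlt : (2 : ℝ) ^ (-α) < 2 ^ (-β) := rpow_lt_rpow_of_exponent_lt one_lt_two (by linarith)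
  obtain ⟨x₁, hx₁⟩ := eventually_atTop.1 ((hF 2 two_pos).eventually_lt_const hlt)
  have hstep : ∀ x ≥ max x₁ 0, F (2 * x) ≤ 2 ^ (-β) * F x := fun x hx =>
    ((div_lt_iff₀ (hpos x)).1 (hx₁ x (le_of_max_le_left hx))).le
  filter_upwards [eventually_ge_atTop (max x₁ 0)] with x hx s hs
  exact hanti.le_rpow_mul_of_forall_le_mul (fun y => (hpos y).le) one_lt_two hβ
    (le_max_right _ _) hstep hx hs

theorem IsRegularlyVarying.tendsto_setIntegral_Ioi_div {α : ℝ} (hF : IsRegularlyVarying F (-α))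
    (hanti : Antitone F) (hpos : ∀ x, 0 < F x) (hα : 1 < α) :
    Tendsto (fun x => (∫ t in Ioi x, F t) / (x * F x)) atTop (𝓝 (α - 1)⁻¹) := by
  obtain ⟨β, hβ1, hβα⟩ := exists_between hα
  have hlim : Tendsto (fun x => ∫ s in Ioi 1, F (x * s) / F x) atTop
      (𝓝 (∫ s in Ioi (1 : ℝ), s ^ (-α))) := by
    refine tendsto_integral_filter_of_dominated_convergence (fun s => 2 ^ β * s ^ (-β))
      (.of_forall fun x => ?_) ?_ ?_ ?_
    · exact ((hanti.measurable.comp (measurable_const_mul x)).div_const _).aestronglyMeasurable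
    · filter_upwards [hF.eventually_le_rpow_mul hanti hpos (by positivity) hβα]
        with x hx
      refine (ae_restrict_iff' measurableSet_Ioi).2 (.of_forall fun s hs => ?_)
      rw [norm_of_nonneg (div_nonneg (hpos _).le (hpos x).le), div_le_iff₀ (hpos x)]
      exact hx s (le_of_lt hs)
    · exact (integrableOn_Ioi_rpow_of_lt (neg_lt_neg hβ1) one_pos).const_mul _
    · refine (ae_restrict_iff' measurableSet_Ioi).2 (.of_forall fun s hs => ?_)
      exact (hF s (one_pos.trans hs)).congr fun x => by rw [mul_comm]
  have hvalue : ∫ s in Ioi (1 : ℝ), s ^ (-α) = (α - 1)⁻¹ := by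
    rw [integral_Ioi_rpow_of_lt (by linarith) one_pos, one_rpow, neg_div, ← div_neg, neg_add',
      neg_neg, one_div]
  rw [hvalue] at hlim
  refine hlim.congr' ((eventually_gt_atTop 0).mono fun x hx => ?_)
  rw [integral_div, integral_comp_mul_left_Ioi _ _ hx, mul_one, smul_eq_mul]
  field_simp

end RegularVariation

theorem order_quantity_cost_scaling_general
    (μ : Measure ℝ) (hprob : IsProbabilityMeasure μ)
    (α : ℝ) (hα : 1 < α)
    (hrv : ∀ t : ℝ, 0 < t →
      Tendsto (fun x : ℝ => (μ (Set.Ioi (t * x))).toReal / (μ (Set.Ioi x)).toReal)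
        atTop (nhds (t ^ (-α))))
    (qs : ℝ → ℝ)
    (hq : ∀ η ∈ Set.Ioo (0 : ℝ) 1, (μ (Set.Ioi (qs η))).toReal = 1 - η) :
    Tendsto
      (fun η : ℝ =>
        ((1 - η) * qs η + ∫ x, max (x - qs η) 0 ∂μ) / ((1 - η) * qs η))
      (nhdsWithin 1 (Set.Iio 1)) (nhds (α / (α - 1))) := by
  set F : ℝ → ℝ := fun x => μ.real (Ioi x)
  have hF : IsRegularlyVarying F (-α) := hrv
  have hanti : Antitone F := fun a b hab => measureReal_mono (Ioi_subset_Ioi hab)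
  have hpos := hF.pos_of_antitone hanti fun x => measureReal_nonneg
  have hIoo : ∀ᶠ η in 𝓝[<] (1 : ℝ), η ∈ Ioo 0 1 := Ioo_mem_nhdsLT one_pos
  have hFqs : Tendsto (F ∘ qs) (𝓝[<] 1) (𝓝 0) := by
    have h : Tendsto (fun η : ℝ => 1 - η) (𝓝[<] 1) (𝓝 0) :=
      ((continuous_const.sub continuous_id).tendsto' 1 0 (sub_self 1)).mono_left
        nhdsWithin_le_nhds
    exact h.congr' (hIoo.mono fun η h => (hq η h).symm)
  have hqs := hanti.tendsto_atTop_of_tendsto_nhds_zero hpos hFqs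
  have hkaramata := (hF.tendsto_setIntegral_Ioi_div hanti hpos hα).comp hqs
  have hα1 : α - 1 ≠ 0 := by linarith
  rw [show α / (α - 1) = 1 + (α - 1)⁻¹ by field_simp; ring]
  refine (tendsto_const_nhds.add hkaramata).congr' ?_
  filter_upwards [hIoo, hqs.eventually (eventually_gt_atTop 0)] with η hη hq0
  have hFq : F (qs η) = 1 - η := hq η hη
  have hFq_pos := hpos (qs η)
  have hcost : ∫ x, max (x - qs η) 0 ∂μ = ∫ t in Ioi (qs η), F t :=
    integral_max_sub_zero_eq_setIntegral_Ioi μ (qs η)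
  rw [Function.comp_apply, hcost, ← hFq]
  field_simp

theorem order_quantity_cost_scaling
    (μ : Measure ℝ) (hprob : IsProbabilityMeasure μ) (hsupp : μ (Set.Iio 0) = 0)
    (α : ℝ) (hα : 1 < α)
    (hrv : ∀ t : ℝ, 0 < t →
      Tendsto (fun x : ℝ => (μ (Set.Ioi (t * x))).toReal / (μ (Set.Ioi x)).toReal)
        atTop (nhds (t ^ (-α))))
    (qs : ℝ → ℝ)
    (hq : ∀ η ∈ Set.Ioo (0 : ℝ) 1, (μ (Set.Ioi (qs η))).toReal = 1 - η) :
    Tendsto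
      (fun η : ℝ =>
        ((1 - η) * qs η + ∫ x, max (x - qs η) 0 ∂μ) / ((1 - η) * qs η))
      (nhdsWithin 1 (Set.Iio 1)) (nhds (α / (α - 1))) :=
  order_quantity_cost_scaling_general μ hprob α hα hrv qs hq
end
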